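/- arXiv:1909.02746 — 4 statements merged into one kernel-verified Lean document; each statement's English description precedes it below -/
import Mathlib

section
/- (Lemma 1) Let G = (V, E) be an N-family graph, let F and F' be types, let agg : Multiset F → F' and comb : F × F' → F be arbitrary functions, and let h : V → F be a feature assignment taking the constant value h_b on every black vertex and the constant value h_w on every white vertex. Define the new feature assignment Φ(h) : V → F by Φ(h)(v) = comb(h(v), agg({h(u) : u ∈ N(v)})), where {h(u) : u ∈ N(v)} is the multiset of neighbor features of v. Then Φ(h) takes the constant value comb(h_b, agg({h_b, h_w, h_w})) on every black vertex and the constant value comb(h_w, agg({h_b, h_b})) on every white vertex; in particular, G with the feature assignment Φ(h) is again an N-family graph with a feature assignment constant on each color class. -/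
/-- `G` together with the 2-coloring `black` (black = `true`, white = `false`) is an
`N`-family graph: exactly `2N` black and `2N` white vertices, every white vertex has
exactly two neighbors, both black, and every black vertex has exactly three neighbors,
exactly two white and exactly one black. -/
def IsNFamily {V : Type*} [Fintype V] (G : SimpleGraph V) (black : V → Bool) (N : ℕ) : Prop :=
  {v : V | black v = true}.ncard = 2 * N ∧
  {v : V | black v = false}.ncard = 2 * N ∧
  (∀ v : V, black v = false →
    (G.neighborSet v).ncard = 2 ∧ ∀ u ∈ G.neighborSet v, black u = true) ∧
  (∀ v : V, black v = true →
    (G.neighborSet v).ncard = 3 ∧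
    {u ∈ G.neighborSet v | black u = false}.ncard = 2 ∧
    {u ∈ G.neighborSet v | black u = true}.ncard = 1)

/-- The multiset of feature values of the neighbors of `v` under the feature map `f`. -/
def neighborFeatures {V : Type*} [Fintype V] (G : SimpleGraph V) [DecidableRel G.Adj]
    {F : Type*} (f : V → F) (v : V) : Multiset F :=
  (G.neighborFinset v).val.map f

/-- The GNN layer with 1-hop neighborhood aggregator `agg` and combine function `comb`:
it maps the feature assignment `f` to `v ↦ comb (f v, agg {f u : u ∈ N(v)})`. -/
def gnnLayer {V : Type*} [Fintype V] (G : SimpleGraph V) [DecidableRel G.Adj]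
    {F F' : Type*} (agg : Multiset F → F') (comb : F × F' → F) (f : V → F) : V → F :=
  fun v => comb (f v, agg (neighborFeatures G f v))

/-- Lemma 1: applying a GNN layer (with arbitrary aggregator `agg` and combine `comb`)
to an `N`-family graph whose features are constant on each color class (`h_b` on black,
`h_w` on white) yields features that are again constant on each color class, namely
`comb (h_b, agg {h_b, h_w, h_w})` on black vertices and `comb (h_w, agg {h_b, h_b})` on
white vertices; in particular, the graph with the new features is again an `N`-family
graph with a feature assignment constant on each color class. -/
theorem nfamily_gnnLayer {V : Type*} [Fintype V] (G : SimpleGraph V)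
    [DecidableRel G.Adj] (black : V → Bool) (N : ℕ) (h : IsNFamily G black N)
    {F F' : Type*} (agg : Multiset F → F') (comb : F × F' → F) (f : V → F) (hb hw : F)
    (hfb : ∀ v, black v = true → f v = hb) (hfw : ∀ v, black v = false → f v = hw) :
    ((∀ v, black v = true → gnnLayer G agg comb f v = comb (hb, agg {hb, hw, hw})) ∧
     (∀ v, black v = false → gnnLayer G agg comb f v = comb (hw, agg {hb, hb}))) ∧
    IsNFamily G black N := by
  obtain ⟨h1, h2, hW, hB⟩ := h
  refine ⟨⟨?_, ?_⟩, h1, h2, hW, hB⟩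
  · intro v hv
    obtain ⟨hc3, hw2, hb1⟩ := hB v hv
    have key : neighborFeatures G f v = {hb, hw, hw} := by
      unfold neighborFeatures
      have hsplit := Multiset.filter_add_not (fun u => black u = true)
        (G.neighborFinset v).val
      have hcard1 : ((G.neighborFinset v).filter (fun u => black u = true)).card = 1 := by
        have : {u ∈ G.neighborSet v | black u = true} =
            ↑((G.neighborFinset v).filter (fun u => black u = true)) := by
          ext u; simp [SimpleGraph.mem_neighborFinset, SimpleGraph.mem_neighborSet]
        rw [this, Set.ncard_coe_finset] at hb1
        exact hb1
      have hcard2 : ((G.neighborFinset v).filter (fun u => ¬ black u = true)).card = 2 := by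
        have : {u ∈ G.neighborSet v | black u = false} =
            ↑((G.neighborFinset v).filter (fun u => ¬ black u = true)) := by
          ext u; simp [SimpleGraph.mem_neighborFinset, SimpleGraph.mem_neighborSet]
        rw [this, Set.ncard_coe_finset] at hw2
        exact hw2
      have e1 : Multiset.map f (Multiset.filter (fun u => black u = true)
          (G.neighborFinset v).val) = Multiset.replicate 1 hb := by
        rw [Multiset.eq_replicate]
        constructor
        · rw [Multiset.card_map]; exact hcard1
        · intro b hbm
          obtain ⟨u, hu, rfl⟩ := Multiset.mem_map.mp hbm
          exact hfb u (Multiset.mem_filter.mp hu).2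
      have e2 : Multiset.map f (Multiset.filter (fun u => ¬ black u = true)
          (G.neighborFinset v).val) = Multiset.replicate 2 hw := by
        rw [Multiset.eq_replicate]
        constructor
        · rw [Multiset.card_map]; exact hcard2
        · intro b hbm
          obtain ⟨u, hu, rfl⟩ := Multiset.mem_map.mp hbm
          exact hfw u (Bool.eq_false_iff.mpr (Multiset.mem_filter.mp hu).2)
      calc Multiset.map f (G.neighborFinset v).val
          = Multiset.map f (Multiset.filter (fun u => black u = true)
              (G.neighborFinset v).val) +
            Multiset.map f (Multiset.filter (fun u => ¬ black u = true)
              (G.neighborFinset v).val) := by rw [← Multiset.map_add, hsplit]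
        _ = Multiset.replicate 1 hb + Multiset.replicate 2 hw := by rw [e1, e2]
        _ = {hb, hw, hw} := rfl
    simp [gnnLayer, key, hfb v hv]
  · intro v hv
    obtain ⟨hc2, hall⟩ := hW v hv
    have key : neighborFeatures G f v = {hb, hb} := by
      unfold neighborFeatures
      have hcard : (G.neighborFinset v).card = 2 := by
        rw [← Set.ncard_coe_finset, SimpleGraph.neighborFinset_def, Set.coe_toFinset]
        exact hc2
      have : Multiset.map f (G.neighborFinset v).val = Multiset.replicate 2 hb := by
        rw [Multiset.eq_replicate]
        constructor
        · rw [Multiset.card_map]; exact hcard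
        · intro b hbm
          obtain ⟨u, hu, rfl⟩ := Multiset.mem_map.mp hbm
          exact hfb u (hall u ((SimpleGraph.mem_neighborFinset G v u).mp hu))
      rw [this]; rfl
    simp [gnnLayer, key, hfw v hv]
end

section
/- Let F and F' be types and let (agg_k : Multiset F → F', comb_k : F × F' → F) for k = 1, …, K be a sequence of GNN layers. Define sequences (h_b^{(k)}) and (h_w^{(k)}) in F recursively by: h_b^{(0)} = h_b, h_w^{(0)} = h_w, and for k ≥ 1, h_b^{(k)} = comb_k(h_b^{(k-1)}, agg_k({h_b^{(k-1)}, h_w^{(k-1)}, h_w^{(k-1)}})) and h_w^{(k)} = comb_k(h_w^{(k-1)}, agg_k({h_b^{(k-1)}, h_b^{(k-1)}})). Then for EVERY N-family graph G (for every N ≥ 1) with initial feature assignment taking value h_b on black vertices and h_w on white vertices, the feature assignment obtained by applying the layers Φ_1, …, Φ_k in order takes the constant value h_b^{(k)} on every black vertex and the constant value h_w^{(k)} on every white vertex, for every 0 ≤ k ≤ K. In particular, these values do not depend on the choice of G or on N. -/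
/-- The feature assignment obtained from the initial features `f0` by applying the GNN
layers `Φ_1, …, Φ_k` in order, where layer `Φ_{k+1}` has 1-hop neighborhood aggregator
`agg k` and combine function `comb k`:
`Φ(f)(v) = comb (f v, agg {f u : u ∈ N(v)})`. -/
def gnnIter {V : Type*} [Fintype V] (G : SimpleGraph V) [DecidableRel G.Adj]
    {F F' : Type*} (agg : ℕ → Multiset F → F') (comb : ℕ → F × F' → F)
    (f0 : V → F) : ℕ → V → F
  | 0 => f0
  | k + 1 => fun v =>
      comb k (gnnIter G agg comb f0 k v, agg k (neighborFeatures G (gnnIter G agg comb f0 k) v))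

/-- The graph-independent recursion for the black and white feature values:
`h_b^{(0)} = h_b`, `h_w^{(0)} = h_w`,
`h_b^{(k+1)} = comb_{k+1} (h_b^{(k)}, agg_{k+1} {h_b^{(k)}, h_w^{(k)}, h_w^{(k)}})`,
`h_w^{(k+1)} = comb_{k+1} (h_w^{(k)}, agg_{k+1} {h_b^{(k)}, h_b^{(k)}})`.
The first component is the black value, the second the white value. -/
def colorSeq {F F' : Type*} (agg : ℕ → Multiset F → F') (comb : ℕ → F × F' → F)
    (hb hw : F) : ℕ → F × F
  | 0 => (hb, hw)
  | k + 1 =>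
      let p := colorSeq agg comb hb hw k
      (comb k (p.1, agg k ({p.1, p.2, p.2} : Multiset F)),
       comb k (p.2, agg k ({p.1, p.1} : Multiset F)))

lemma mapconst {V F : Type*} (s : Multiset V) (f : V → F) (c : F) (h : ∀ u ∈ s, f u = c) :
    s.map f = Multiset.replicate (Multiset.card s) c := by
  rw [Multiset.eq_replicate]
  constructor
  · simp
  · intro b hb
    obtain ⟨a, ha, rfl⟩ := Multiset.mem_map.mp hb
    exact h a ha

lemma keyfeat {V : Type*} [Fintype V] (G : SimpleGraph V) [DecidableRel G.Adj]
    {F : Type*} (black : V → Bool) (f : V → F) (cb cw : F)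
    (hfb : ∀ v, black v = true → f v = cb) (hfw : ∀ v, black v = false → f v = cw) (v : V) :
    neighborFeatures G f v =
      Multiset.replicate (((G.neighborFinset v).filter (fun u => black u = true)).card) cb +
      Multiset.replicate (((G.neighborFinset v).filter (fun u => black u = false)).card) cw := by
  classical
  unfold neighborFeatures
  have hs : (G.neighborFinset v).val.map f
      = (((G.neighborFinset v).filter (fun u => black u = true)).val).map f
        + (((G.neighborFinset v).filter (fun u => black u = false)).val).map f := by
    rw [Finset.filter_val, Finset.filter_val, ← Multiset.map_add]
    congr 1
    have he : Multiset.filter (fun u => black u = false) (G.neighborFinset v).val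
        = Multiset.filter (fun u => ¬ black u = true) (G.neighborFinset v).val := by
      apply Multiset.filter_congr
      intro x _
      simp
    rw [he]
    exact (Multiset.filter_add_not _ _).symm
  rw [hs]
  congr 1
  · rw [mapconst _ f cb]
    · simp [Finset.card]
    · intro u hu
      exact hfb u (by simpa using (Finset.mem_filter.mp hu).2)
  · rw [mapconst _ f cw]
    · simp [Finset.card]
    · intro u hu
      exact hfw u (by simpa using (Finset.mem_filter.mp hu).2)

lemma setcard {V : Type*} [Fintype V] (G : SimpleGraph V) [DecidableRel G.Adj]
    (black : V → Bool) (b : Bool) (v : V) :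
    {u ∈ G.neighborSet v | black u = b}.ncard
      = ((G.neighborFinset v).filter (fun u => black u = b)).card := by
  classical
  rw [show {u ∈ G.neighborSet v | black u = b}
      = ↑((G.neighborFinset v).filter (fun u => black u = b)) by ext u; simp]
  exact Set.ncard_coe_finset _

/-- For every `N ≥ 1` and every `N`-family graph `G` with initial features `h_b` on black
and `h_w` on white vertices, after applying the GNN layers `Φ_1, …, Φ_k` (for any
`0 ≤ k ≤ K`) the features are constantly `h_b^{(k)}` on black vertices and constantly
`h_w^{(k)}` on white vertices, where `h_b^{(k)}, h_w^{(k)}` are given by the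
graph-independent recursion `colorSeq`; in particular these values do not depend on the
choice of `G` or on `N`. -/
theorem nfamily_gnnIter {V : Type*} [Fintype V] (G : SimpleGraph V) [DecidableRel G.Adj]
    (black : V → Bool) (N : ℕ) (hN : 1 ≤ N) (h : IsNFamily G black N)
    {F F' : Type*} (agg : ℕ → Multiset F → F') (comb : ℕ → F × F' → F)
    (hb hw : F) (f0 : V → F)
    (hf0b : ∀ v, black v = true → f0 v = hb) (hf0w : ∀ v, black v = false → f0 v = hw)
    (K : ℕ) :
    ∀ k ≤ K,
      (∀ v, black v = true → gnnIter G agg comb f0 k v = (colorSeq agg comb hb hw k).1) ∧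
      (∀ v, black v = false → gnnIter G agg comb f0 k v = (colorSeq agg comb hb hw k).2) := by
  classical
  obtain ⟨-, -, hwhite, hblack⟩ := h
  intro k hk
  clear hk
  induction k with
  | zero => exact ⟨hf0b, hf0w⟩
  | succ k ih =>
    obtain ⟨ihb, ihw⟩ := ih
    set cb := (colorSeq agg comb hb hw k).1
    set cw := (colorSeq agg comb hb hw k).2
    have hfeat : ∀ v, neighborFeatures G (gnnIter G agg comb f0 k) v =
        Multiset.replicate (((G.neighborFinset v).filter (fun u => black u = true)).card) cb +
        Multiset.replicate (((G.neighborFinset v).filter (fun u => black u = false)).card) cw :=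
      keyfeat G black _ cb cw ihb ihw
    constructor
    · intro v hv
      obtain ⟨-, hc2, hc1⟩ := hblack v hv
      rw [setcard] at hc1 hc2
      show comb k (_, agg k _) = comb k (cb, agg k ({cb, cw, cw} : Multiset F))
      rw [ihb v hv, hfeat v, hc1, hc2]
      congr 2
    · intro v hv
      obtain ⟨hc, hall⟩ := hwhite v hv
      have h1 : ((G.neighborFinset v).filter (fun u => black u = true)).card = 2 := by
        rw [← setcard]
        have : {u ∈ G.neighborSet v | black u = true} = G.neighborSet v := by
          ext u; simp only [Set.mem_setOf_eq, Set.mem_sep_iff]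
          exact ⟨fun hu => hu.1, fun hu => ⟨hu, hall u hu⟩⟩
        rw [this]; exact hc
      have h0 : ((G.neighborFinset v).filter (fun u => black u = false)).card = 0 := by
        rw [Finset.card_eq_zero, Finset.filter_eq_empty_iff]
        intro u hu
        simp [hall u (by simpa using hu)]
      show comb k (_, agg k _) = comb k (cw, agg k ({cb, cb} : Multiset F))
      rw [ihw v hv, hfeat v, h1, h0]
      congr 2
end

section
/- (Theorem 1, mean readout) Let F be a real vector space, let F' be a type, and let (agg_k : Multiset F → F', comb_k : F × F' → F) for k = 1, …, K be a sequence of GNN layers. Fix initial values h_b, h_w ∈ F. For an N-family graph G with initial features h_b on black and h_w on white vertices, let h^{(k)} denote the feature assignment after applying layers Φ_1, …, Φ_k, and let the mean readout at layer k be h_G^{(k)} = (1/|V|) · Σ_{v ∈ V} h^{(k)}(v). Then for every k, h_G^{(k)} = (h_b^{(k)} + h_w^{(k)})/2, where h_b^{(k)}, h_w^{(k)} are defined by the recursion h_b^{(k)} = comb_k(h_b^{(k-1)}, agg_k({h_b^{(k-1)}, h_w^{(k-1)}, h_w^{(k-1)}})), h_w^{(k)} = comb_k(h_w^{(k-1)},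 agg_k({h_b^{(k-1)}, h_b^{(k-1)}})) with h_b^{(0)} = h_b, h_w^{(0)} = h_w. Consequently, for any two graphs G₁ (an N₁-family graph) and G₂ (an N₂-family graph) with the same initial values h_b, h_w and the same layers, the tuples (h_{G₁}^{(0)}, h_{G₁}^{(1)}, …, h_{G₁}^{(K)}) and (h_{G₂}^{(0)}, h_{G₂}^{(1)}, …, h_{G₂}^{(K)}) are equal; i.e., the concatenated graph representation with mean readout is the same constant for every graph in the family, regardless of the aggregators and combine functions. -/
/-- The mean readout of the feature assignment `f` on the finite vertex type `V`:
`(1/|V|) • ∑_{v ∈ V} f v`. -/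
noncomputable def meanReadout {V : Type*} [Fintype V] {F : Type*} [AddCommGroup F] [Module ℝ F]
    (f : V → F) : F :=
  ((Fintype.card V : ℝ)⁻¹) • ∑ v : V, f v

/-! By induction on the layer, every vertex of an `N`-family graph carries the `colorSeq` value
of its colour: a black vertex sees the multiset `{black, white, white}` of neighbour features and
a white vertex sees `{black, black}`, which is exactly the recursion defining `colorSeq`. Since the
two colour classes have the same size, the mean readout is the average of the two values. -/

open Finset

section Coloring

variable {V : Type*} [Fintype V]

lemma neighborFeatures_ite {F : Type*} (G : SimpleGraph V) [DecidableRel G.Adj]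
    (black : V → Bool) (a b : F) (v : V) :
    neighborFeatures G (fun u => if black u then a else b) v =
      Multiset.replicate #{u ∈ G.neighborFinset v | black u = true} a +
        Multiset.replicate #{u ∈ G.neighborFinset v | black u = false} b := by
  rw [neighborFeatures, ← Multiset.filter_add_not (black · = true) (G.neighborFinset v).val,
    Multiset.map_add]
  congr 1
  · rw [Multiset.map_congr rfl fun u hu => if_pos (Multiset.of_mem_filter hu),
      Multiset.map_const']
    rfl
  · rw [Multiset.map_congr rfl fun u hu =>
        if_neg (Multiset.of_mem_filter (p := (¬black · = true)) hu), Multiset.map_const']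
    simp only [Bool.not_eq_true]
    rfl

lemma ncard_sep_neighborSet (G : SimpleGraph V) [DecidableRel G.Adj] (v : V)
    (p : V → Prop) [DecidablePred p] :
    {u ∈ G.neighborSet v | p u}.ncard = #{u ∈ G.neighborFinset v | p u} := by
  rw [← Set.ncard_coe_finset, coe_filter]
  simp only [SimpleGraph.mem_neighborFinset, SimpleGraph.mem_neighborSet]

end Coloring

namespace IsNFamily

variable {V : Type*} [Fintype V] {G : SimpleGraph V} {black : V → Bool} {N : ℕ}

lemma card_black (h : IsNFamily G black N) : #{v | black v = true} = 2 * N := by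
  rw [← h.1, ← Set.ncard_coe_finset, coe_filter_univ]

lemma card_white (h : IsNFamily G black N) : #{v | black v = false} = 2 * N := by
  rw [← h.2.1, ← Set.ncard_coe_finset, coe_filter_univ]

variable [DecidableRel G.Adj]

lemma card_neighbors_of_black (h : IsNFamily G black N) {v : V} (hv : black v = true) :
    #{u ∈ G.neighborFinset v | black u = true} = 1 ∧
      #{u ∈ G.neighborFinset v | black u = false} = 2 := by
  obtain ⟨-, hw, hb⟩ := h.2.2.2 v hv
  rw [← ncard_sep_neighborSet, ← ncard_sep_neighborSet]
  exact ⟨hb, hw⟩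

lemma card_neighbors_of_white (h : IsNFamily G black N) {v : V} (hv : black v = false) :
    #{u ∈ G.neighborFinset v | black u = true} = 2 ∧
      #{u ∈ G.neighborFinset v | black u = false} = 0 := by
  obtain ⟨hdeg, hnb⟩ := h.2.2.1 v hv
  have hnb' : ∀ u ∈ G.neighborFinset v, black u = true := fun u hu =>
    hnb u ((G.mem_neighborFinset v u).1 hu)
  rw [filter_true_of_mem hnb', card_eq_zero, filter_eq_empty_iff]
  refine ⟨?_, fun u hu => by simp [hnb' u hu]⟩
  rw [← Set.ncard_coe_finset, SimpleGraph.coe_neighborFinset, hdeg]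

variable {F F' : Type*} {agg : ℕ → Multiset F → F'} {comb : ℕ → F × F' → F} {hb hw : F}
  {f : V → F}

theorem gnnIter_eq_colorSeq (h : IsNFamily G black N)
    (hfb : ∀ v, black v = true → f v = hb) (hfw : ∀ v, black v = false → f v = hw) (k : ℕ) :
    gnnIter G agg comb f k = fun v =>
      if black v then (colorSeq agg comb hb hw k).1 else (colorSeq agg comb hb hw k).2 := by
  induction k with
  | zero =>
    funext v
    cases hv : black v
    · exact hfw v hv
    · exact hfb v hv
  | succ k ih =>
    funext v
    rw [gnnIter, ih]
    beta_reduce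
    rw [neighborFeatures_ite]
    cases hv : black v
    · obtain ⟨hb2, hw0⟩ := h.card_neighbors_of_white hv
      rw [hb2, hw0]
      rfl
    · obtain ⟨hb1, hw2⟩ := h.card_neighbors_of_black hv
      rw [hb1, hw2]
      rfl

end IsNFamily

theorem meanReadout_ite {V : Type*} [Fintype V] {F : Type*} [AddCommGroup F] [Module ℝ F]
    (black : V → Bool) (a b : F) {n : ℕ} (hn : n ≠ 0)
    (hblack : #{v | black v = true} = n) (hwhite : #{v | black v = false} = n) :
    meanReadout (fun v => if black v then a else b) = (2 : ℝ)⁻¹ • (a + b) := by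
  have hcard : Fintype.card V = 2 * n := by
    rw [← card_univ, ← card_filter_add_card_filter_not (black · = true)]
    simp only [Bool.not_eq_true, hblack, hwhite]
    ring
  have hsum : ∑ v, (if black v then a else b) = (n : ℝ) • (a + b) := by
    rw [sum_ite, sum_const, sum_const]
    simp only [Bool.not_eq_true, hblack, hwhite, Nat.cast_smul_eq_nsmul, smul_add]
  rw [meanReadout, hsum, hcard, smul_smul]
  congr 1
  field_simp
  push_cast
  ring

theorem IsNFamily.meanReadout_gnnIter {V : Type*} [Fintype V] {G : SimpleGraph V}
    [DecidableRel G.Adj] {black : V → Bool} {N : ℕ} (h : IsNFamily G black N) (hN : N ≠ 0)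
    {F F' : Type*} [AddCommGroup F] [Module ℝ F] (agg : ℕ → Multiset F → F')
    (comb : ℕ → F × F' → F) {hb hw : F} {f : V → F}
    (hfb : ∀ v, black v = true → f v = hb) (hfw : ∀ v, black v = false → f v = hw) (k : ℕ) :
    meanReadout (gnnIter G agg comb f k) =
      (2 : ℝ)⁻¹ • ((colorSeq agg comb hb hw k).1 + (colorSeq agg comb hb hw k).2) := by
  rw [h.gnnIter_eq_colorSeq hfb hfw k]
  exact meanReadout_ite black _ _ (by omega) h.card_black h.card_white

/-- Theorem 1 (mean readout): for an `N`-family graph with initial features `h_b` on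
black and `h_w` on white vertices, the mean readout after `k` GNN layers equals
`(h_b^{(k)} + h_w^{(k)})/2` for every `0 ≤ k ≤ K`. Consequently, any two family graphs
`G₁` (an `N₁`-family graph) and `G₂` (an `N₂`-family graph) with the same initial values
and the same layers have identical mean readouts at every layer, regardless of the
aggregators and combine functions. -/
theorem nfamily_meanReadout {F : Type*} [AddCommGroup F] [Module ℝ F] {F' : Type*}
    (agg : ℕ → Multiset F → F') (comb : ℕ → F × F' → F) (hb hw : F) (K : ℕ)
    {V₁ : Type*} [Fintype V₁] (G₁ : SimpleGraph V₁) [DecidableRel G₁.Adj]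
    (black₁ : V₁ → Bool) (N₁ : ℕ) (hN₁ : 1 ≤ N₁) (h₁ : IsNFamily G₁ black₁ N₁)
    (f₁ : V₁ → F) (hf₁b : ∀ v, black₁ v = true → f₁ v = hb)
    (hf₁w : ∀ v, black₁ v = false → f₁ v = hw)
    {V₂ : Type*} [Fintype V₂] (G₂ : SimpleGraph V₂) [DecidableRel G₂.Adj]
    (black₂ : V₂ → Bool) (N₂ : ℕ) (hN₂ : 1 ≤ N₂) (h₂ : IsNFamily G₂ black₂ N₂)
    (f₂ : V₂ → F) (hf₂b : ∀ v, black₂ v = true → f₂ v = hb)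
    (hf₂w : ∀ v, black₂ v = false → f₂ v = hw) :
    (∀ k ≤ K, meanReadout (gnnIter G₁ agg comb f₁ k) =
      ((2 : ℝ)⁻¹) • ((colorSeq agg comb hb hw k).1 + (colorSeq agg comb hb hw k).2)) ∧
    (∀ k ≤ K, meanReadout (gnnIter G₁ agg comb f₁ k) =
      meanReadout (gnnIter G₂ agg comb f₂ k)) := by
  have mean₁ := h₁.meanReadout_gnnIter (by omega) agg comb hf₁b hf₁w
  have mean₂ := h₂.meanReadout_gnnIter (by omega) agg comb hf₂b hf₂w
  exact ⟨fun k _ => mean₁ k, fun k _ => (mean₁ k).trans (mean₂ k).symm⟩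
end

section
/- (Theorem 1, general readout) Let F and F' be types, let (agg_k : Multiset F → F', comb_k : F × F' → F) for k = 1, …, K be a sequence of GNN layers, let R be a type, and let Ψ : Multiset F → R be an arbitrary readout function. Fix initial values h_b, h_w ∈ F. For an N-family graph G with initial features h_b on black and h_w on white vertices, let h^{(k)} denote the feature assignment after applying layers Φ_1, …, Φ_k, and let h_G^{(k)} = Ψ({h^{(k)}(v) : v ∈ V}) be the readout of the multiset of all node features at layer k. Then h_G^{(k)} = Ψ(M_k), where M_k is the multiset consisting of 2N copies of h_b^{(k)} and 2N copies of h_w^{(k)}, with h_b^{(k)}, h_w^{(k)} given by the recursion h_b^{(k)} = comb_k(h_b^{(k-1)}, agg_k({h_b^{(k-1)}, h_w^{(k-1)}, h_w^{(k-1)}})), h_w^{(k)} = comb_k(h_w^{(k-1)}, agg_k({h_b^{(k-1)}, h_b^{(k-1)}})), h_b^{(0)} = h_b, h_w^{(0)} = h_w. Consequently, if G₁ and G₂ are N₁- and N₂-family graphs with the same initial values, the same layers, the same readout Ψ, and the same number of vertices (i.e., N₁ = N₂), then (h_{G₁}^{(0)}, …, h_{G₁}^{(K)}) = (h_{G₂}^{(0)},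 …, h_{G₂}^{(K)}); i.e., the concatenated graph representation depends only on |V|. -/
/-- The multiset `{f v : v ∈ V}` of all node feature values, counted with multiplicity. -/
def allFeatures {V : Type*} [Fintype V] {F : Type*} (f : V → F) : Multiset F :=
  Finset.univ.val.map f


lemma map_split {V F : Type*} (s : Multiset V) (g : V → F) (q : V → Bool) (a b : F)
    (ha : ∀ u ∈ s, q u = true → g u = a) (hbx : ∀ u ∈ s, q u = false → g u = b)
    (na nb : ℕ) (hna : Multiset.card (s.filter (fun u => q u = true)) = na)
    (hnb : Multiset.card (s.filter (fun u => ¬ q u = true)) = nb) :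
    s.map g = Multiset.replicate na a + Multiset.replicate nb b := by
  conv_lhs => rw [← Multiset.filter_add_not (fun u => q u = true) s]
  rw [Multiset.map_add]
  congr 1
  · rw [Multiset.map_congr rfl (fun u hu =>
      ha u (Multiset.mem_filter.mp hu).1 (Multiset.mem_filter.mp hu).2),
      Multiset.map_const', hna]
  · rw [Multiset.map_congr rfl (fun u hu =>
      hbx u (Multiset.mem_filter.mp hu).1
        (Bool.eq_false_iff.mpr (Multiset.mem_filter.mp hu).2)),
      Multiset.map_const', hnb]

lemma ncard_filter_neighbor {V : Type*} [Fintype V] (G : SimpleGraph V) [DecidableRel G.Adj]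
    (v : V) (q : V → Prop) [DecidablePred q] :
    {u ∈ G.neighborSet v | q u}.ncard = Multiset.card ((G.neighborFinset v).val.filter q) := by
  rw [← Finset.filter_val, ← Finset.card_def, ← Set.ncard_coe_finset]
  congr 1; ext u; simp

lemma ncard_univ_filter {V : Type*} [Fintype V] (q : V → Prop) [DecidablePred q] :
    {v : V | q v}.ncard = Multiset.card ((Finset.univ : Finset V).val.filter q) := by
  rw [← Finset.filter_val, ← Finset.card_def, ← Set.ncard_coe_finset]
  congr 1; ext u; simp
lemma nfamily_key {F F' : Type*} (agg : ℕ → Multiset F → F') (comb : ℕ → F × F' → F)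
    (hb hw : F)
    {V : Type*} [Fintype V] (G : SimpleGraph V) [DecidableRel G.Adj]
    (black : V → Bool) (N : ℕ) (h : IsNFamily G black N)
    (f : V → F) (hfb : ∀ v, black v = true → f v = hb)
    (hfw : ∀ v, black v = false → f v = hw) :
    ∀ k v, gnnIter G agg comb f k v =
      if black v then (colorSeq agg comb hb hw k).1 else (colorSeq agg comb hb hw k).2 := by
  intro k
  induction k with
  | zero =>
    intro v
    by_cases hv : black v = true
    · simp [gnnIter, colorSeq, hv, hfb v hv]
    · simp only [Bool.not_eq_true] at hv
      simp [gnnIter, colorSeq, hv, hfw v hv]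
  | succ k ih =>
    intro v
    set p := colorSeq agg comb hb hw k with hp
    have hnf : neighborFeatures G (gnnIter G agg comb f k) v =
        (if black v then ({p.1, p.2, p.2} : Multiset F) else ({p.1, p.1} : Multiset F)) := by
      unfold neighborFeatures
      by_cases hv : black v = true
      · obtain ⟨-, hw2, hb1⟩ := h.2.2.2 v hv
        rw [ncard_filter_neighbor] at hw2 hb1
        have := map_split (G.neighborFinset v).val (gnnIter G agg comb f k) black p.1 p.2
          (fun u _ hu => by rw [ih u, if_pos hu])
          (fun u _ hu => by rw [ih u]; simp [hu]) 1 2 hb1 (by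
            rw [← hw2]; exact congrArg _ (Multiset.filter_congr (fun u _ => by simp)))
        rw [this, if_pos hv]
        rfl
      · simp only [Bool.not_eq_true] at hv
        obtain ⟨hc2, hall⟩ := h.2.2.1 v hv
        have hcard : Multiset.card (G.neighborFinset v).val = 2 := by
          rw [← Finset.card_def]
          have h1 : (↑(G.neighborFinset v) : Set V).ncard = 2 := by
            rw [show ((G.neighborFinset v : Finset V) : Set V) = G.neighborSet v by ext u; simp]; exact hc2
          rw [Set.ncard_coe_finset] at h1; exact h1
        have : (G.neighborFinset v).val.map (gnnIter G agg comb f k) =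
            Multiset.replicate 2 p.1 := by
          rw [Multiset.map_congr rfl (fun u hu => by
            rw [ih u, if_pos (hall u (by simpa [SimpleGraph.mem_neighborFinset] using hu))]),
            Multiset.map_const', hcard]
        rw [this, if_neg (by simp [hv])]
        rfl
    show comb k (gnnIter G agg comb f k v, agg k (neighborFeatures G (gnnIter G agg comb f k) v)) = _
    rw [ih v, hnf]
    by_cases hv : black v = true
    · rw [if_pos hv, if_pos hv, if_pos hv]
      show _ = (colorSeq agg comb hb hw (k+1)).1
      simp [colorSeq, ← hp]
    · rw [if_neg hv, if_neg hv, if_neg hv]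
      show _ = (colorSeq agg comb hb hw (k+1)).2
      simp [colorSeq, ← hp]

lemma nfamily_allFeatures {F F' : Type*} (agg : ℕ → Multiset F → F') (comb : ℕ → F × F' → F)
    (hb hw : F)
    {V : Type*} [Fintype V] (G : SimpleGraph V) [DecidableRel G.Adj]
    (black : V → Bool) (N : ℕ) (h : IsNFamily G black N)
    (f : V → F) (hfb : ∀ v, black v = true → f v = hb)
    (hfw : ∀ v, black v = false → f v = hw) (k : ℕ) :
    allFeatures (gnnIter G agg comb f k) =
      Multiset.replicate (2 * N) (colorSeq agg comb hb hw k).1 +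
      Multiset.replicate (2 * N) (colorSeq agg comb hb hw k).2 := by
  have key := nfamily_key agg comb hb hw G black N h f hfb hfw
  unfold allFeatures
  refine map_split _ _ black _ _
    (fun u _ hu => by rw [key k u, if_pos hu])
    (fun u _ hu => by rw [key k u]; simp [hu]) _ _ ?_ ?_
  · have := h.1; rw [ncard_univ_filter] at this; exact this
  · have := h.2.1; rw [ncard_univ_filter] at this; rw [← this]
    exact congrArg _ (Multiset.filter_congr (fun u _ => by simp))
/-- Theorem 1 (general readout): for an `N`-family graph with initial features `h_b` on
black and `h_w` on white vertices and an arbitrary readout `Ψ : Multiset F → R`, the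
readout after `k` GNN layers equals `Ψ(M_k)`, where `M_k` consists of `2N` copies of
`h_b^{(k)}` and `2N` copies of `h_w^{(k)}`, for every `0 ≤ k ≤ K`. Consequently, two
family graphs `G₁`, `G₂` (an `N₁`- and an `N₂`-family graph) with the same initial
values, layers and readout, and with the same number of vertices (`N₁ = N₂`), have
identical readouts at every layer: the concatenated representation depends only on
`|V|`. -/
theorem nfamily_generalReadout {F F' R : Type*}
    (agg : ℕ → Multiset F → F') (comb : ℕ → F × F' → F) (Ψ : Multiset F → R)
    (hb hw : F) (K : ℕ)
    {V₁ : Type*} [Fintype V₁] (G₁ : SimpleGraph V₁) [DecidableRel G₁.Adj]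
    (black₁ : V₁ → Bool) (N₁ : ℕ) (hN₁ : 1 ≤ N₁) (h₁ : IsNFamily G₁ black₁ N₁)
    (f₁ : V₁ → F) (hf₁b : ∀ v, black₁ v = true → f₁ v = hb)
    (hf₁w : ∀ v, black₁ v = false → f₁ v = hw)
    {V₂ : Type*} [Fintype V₂] (G₂ : SimpleGraph V₂) [DecidableRel G₂.Adj]
    (black₂ : V₂ → Bool) (N₂ : ℕ) (hN₂ : 1 ≤ N₂) (h₂ : IsNFamily G₂ black₂ N₂)
    (f₂ : V₂ → F) (hf₂b : ∀ v, black₂ v = true → f₂ v = hb)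
    (hf₂w : ∀ v, black₂ v = false → f₂ v = hw) :
    (∀ k ≤ K, Ψ (allFeatures (gnnIter G₁ agg comb f₁ k)) =
      Ψ (Multiset.replicate (2 * N₁) (colorSeq agg comb hb hw k).1 +
         Multiset.replicate (2 * N₁) (colorSeq agg comb hb hw k).2)) ∧
    (N₁ = N₂ → ∀ k ≤ K, Ψ (allFeatures (gnnIter G₁ agg comb f₁ k)) =
      Ψ (allFeatures (gnnIter G₂ agg comb f₂ k))) := by
  constructor
  · intro k _
    rw [nfamily_allFeatures agg comb hb hw G₁ black₁ N₁ h₁ f₁ hf₁b hf₁w k]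
  · intro hNN k _
    rw [nfamily_allFeatures agg comb hb hw G₁ black₁ N₁ h₁ f₁ hf₁b hf₁w k,
        nfamily_allFeatures agg comb hb hw G₂ black₂ N₂ h₂ f₂ hf₂b hf₂w k, hNN]
end
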